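/- arXiv:1309.3606 — 2 statements merged into one kernel-verified Lean document; each statement's English description precedes it below -/
import Mathlib

section
/- (Unisolvence of the Morley element) Let K be a non-degenerate triangle with vertices a₁, a₂, a₃ and edges e₁, e₂, e₃. If p is a polynomial of degree at most 2 on ℝ² such that p(aᵢ) = 0 for i = 1,2,3 and the integral of the normal derivative ∂p/∂ν over each edge eⱼ vanishes, then p ≡ 0. -/
/-!
For a quadratic `p` the derivative `Dp` is an affine function of the point. Hence the average of
`∂p/∂ν` over an edge is its value at the edge midpoint, and `p(y) - p(x) = Dp(midpoint x y)(y - x)`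
exactly, so the vertex conditions kill the tangential derivative at each midpoint as well. Thus
`Dp` vanishes at the three edge midpoints, which span the plane because the vertices do, and
being affine it vanishes identically: `p` is constant, equal to `p(v₁) = 0`.
-/

open Module

theorem affineSpan_eq_top_of_not_collinear {k V P : Type*} [Field k] [AddCommGroup V]
    [Module k V] [AddTorsor V P] [FiniteDimensional k V] (hV : finrank k V = 2) {p₁ p₂ p₃ : P}
    (h : ¬ Collinear k ({p₁, p₂, p₃} : Set P)) : affineSpan k {p₁, p₂, p₃} = ⊤ := by
  have hi := affineIndependent_iff_not_collinear_set.mpr h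
  have := hi.affineSpan_eq_top_iff_card_eq_finrank_add_one.mpr (by simp [hV])
  rwa [Matrix.range_cons, Matrix.range_cons, Matrix.range_cons, Matrix.range_empty,
    Set.union_empty, Set.singleton_union, Set.singleton_union] at this

theorem affineSpan_le_affineSpan_midpoints {V : Type*} [AddCommGroup V] [Module ℝ V]
    (p₁ p₂ p₃ : V) : affineSpan ℝ {p₁, p₂, p₃} ≤
      affineSpan ℝ {midpoint ℝ p₂ p₃, midpoint ℝ p₃ p₁, midpoint ℝ p₁ p₂} := by
  set S := affineSpan ℝ {midpoint ℝ p₂ p₃, midpoint ℝ p₃ p₁, midpoint ℝ p₁ p₂}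
  have hm₁ : midpoint ℝ p₂ p₃ ∈ S := mem_affineSpan ℝ (by simp)
  have hm₂ : midpoint ℝ p₃ p₁ ∈ S := mem_affineSpan ℝ (by simp)
  have hm₃ : midpoint ℝ p₁ p₂ ∈ S := mem_affineSpan ℝ (by simp)
  have sub_add_mem : ∀ {a b c : V}, a ∈ S → b ∈ S → c ∈ S → b - a + c ∈ S := fun ha hb hc =>
    AffineSubspace.vadd_mem_of_mem_direction (AffineSubspace.vsub_mem_direction hb ha) hc
  have vertex_eq : ∀ a b c : V, midpoint ℝ b c - midpoint ℝ a b + midpoint ℝ c a = c := by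
    intro a b c
    simp only [midpoint_eq_smul_add, invOf_eq_inv]
    module
  rw [affineSpan_le, Set.insert_subset_iff, Set.insert_subset_iff, Set.singleton_subset_iff]
  exact ⟨vertex_eq p₂ p₃ p₁ ▸ sub_add_mem hm₁ hm₂ hm₃,
    vertex_eq p₃ p₁ p₂ ▸ sub_add_mem hm₂ hm₃ hm₁, vertex_eq p₁ p₂ p₃ ▸ sub_add_mem hm₃ hm₁ hm₂⟩

theorem linearIndependent_pair_of_dot_eq_zero {e n : ℝ × ℝ} (he : e ≠ 0) (hn : n ≠ 0)
    (hen : e.1 * n.1 + e.2 * n.2 = 0) : LinearIndependent ℝ ![e, n] := by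
  have sq_ne : ∀ u : ℝ × ℝ, u ≠ 0 → u.1 ^ 2 + u.2 ^ 2 ≠ 0 := by
    rintro u hu h
    rw [add_eq_zero_iff_of_nonneg (sq_nonneg _) (sq_nonneg _), sq_eq_zero_iff, sq_eq_zero_iff] at h
    exact hu (Prod.ext h.1 h.2)
  rw [LinearIndependent.pair_iff]
  intro s t hst
  have h₁ : s * e.1 + t * n.1 = 0 := congrArg Prod.fst hst
  have h₂ : s * e.2 + t * n.2 = 0 := congrArg Prod.snd hst
  -- take the dot product of `s • e + t • n = 0` with `e` and with `n`
  refine ⟨(mul_eq_zero.1 ?_).resolve_right (sq_ne e he),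
    (mul_eq_zero.1 ?_).resolve_right (sq_ne n hn)⟩
  · linear_combination e.1 * h₁ + e.2 * h₂ - t * hen
  · linear_combination n.1 * h₁ + n.2 * h₂ - s * hen

theorem AffineMap.intervalIntegral_eq_mul_midpoint (f : ℝ →ᵃ[ℝ] ℝ) (a b : ℝ) :
    ∫ t in a..b, f t = (b - a) * f (midpoint ℝ a b) := by
  have hf : ∀ t, f t = f 0 + t * f.linear 1 := fun t => by
    rw [← smul_eq_mul, ← map_smul, smul_eq_mul, mul_one]
    simpa [add_comm] using f.map_vadd 0 t
  rw [intervalIntegral.integral_congr (fun t _ => hf t), hf (midpoint ℝ a b),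
    intervalIntegral.integral_add intervalIntegrable_const
      ((by fun_prop : Continuous fun t : ℝ => t * f.linear 1).intervalIntegrable _ _),
    intervalIntegral.integral_mul_const, integral_id, midpoint_eq_smul_add]
  simp only [intervalIntegral.integral_const, smul_eq_mul, invOf_eq_inv]
  ring

section QuadPoly

variable (a₀ a₁ a₂ a₃ a₄ a₅ : ℝ)

def quadPoly (z : ℝ × ℝ) : ℝ :=
  a₀ + a₁ * z.1 + a₂ * z.2 + a₃ * z.1 * z.2 + a₄ * z.1 ^ 2 + a₅ * z.2 ^ 2

def quadPolyDeriv : ℝ × ℝ →ᵃ[ℝ] (ℝ × ℝ →L[ℝ] ℝ) where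
  toFun z := (a₁ + a₃ * z.2 + 2 * a₄ * z.1) • ContinuousLinearMap.fst ℝ ℝ ℝ +
    (a₂ + a₃ * z.1 + 2 * a₅ * z.2) • ContinuousLinearMap.snd ℝ ℝ ℝ
  linear :=
    { toFun w := (a₃ * w.2 + 2 * a₄ * w.1) • ContinuousLinearMap.fst ℝ ℝ ℝ +
        (a₃ * w.1 + 2 * a₅ * w.2) • ContinuousLinearMap.snd ℝ ℝ ℝ
      map_add' v w := by ext <;> simp <;> ring
      map_smul' c w := by ext <;> simp <;> ring }
  map_vadd' z w := by ext <;> simp <;> ring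

theorem quadPolyDeriv_apply (z w : ℝ × ℝ) : quadPolyDeriv a₁ a₂ a₃ a₄ a₅ z w =
    (a₁ + a₃ * z.2 + 2 * a₄ * z.1) * w.1 + (a₂ + a₃ * z.1 + 2 * a₅ * z.2) * w.2 := by
  simp [quadPolyDeriv]

theorem hasFDerivAt_quadPoly (z : ℝ × ℝ) :
    HasFDerivAt (quadPoly a₀ a₁ a₂ a₃ a₄ a₅) (quadPolyDeriv a₁ a₂ a₃ a₄ a₅ z) z := by
  have h₁ : HasFDerivAt Prod.fst (ContinuousLinearMap.fst ℝ ℝ ℝ) z := hasFDerivAt_fst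
  have h₂ : HasFDerivAt Prod.snd (ContinuousLinearMap.snd ℝ ℝ ℝ) z := hasFDerivAt_snd
  have h := (((((hasFDerivAt_const a₀ z).add (h₁.const_mul a₁)).add (h₂.const_mul a₂)).add
    ((h₁.const_mul a₃).mul h₂)).add ((h₁.pow 2).const_mul a₄)).add ((h₂.pow 2).const_mul a₅)
  exact h.congr_fderiv (by ext <;> simp [quadPolyDeriv_apply] <;> ring)

theorem fderiv_quadPoly :
    fderiv ℝ (quadPoly a₀ a₁ a₂ a₃ a₄ a₅) = quadPolyDeriv a₁ a₂ a₃ a₄ a₅ :=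
  funext fun z => (hasFDerivAt_quadPoly a₀ a₁ a₂ a₃ a₄ a₅ z).fderiv

theorem quadPoly_sub_eq_deriv_midpoint (x y : ℝ × ℝ) :
    quadPoly a₀ a₁ a₂ a₃ a₄ a₅ y - quadPoly a₀ a₁ a₂ a₃ a₄ a₅ x =
      quadPolyDeriv a₁ a₂ a₃ a₄ a₅ (midpoint ℝ x y) (y - x) := by
  simp only [quadPoly, quadPolyDeriv_apply, midpoint_eq_smul_add, invOf_eq_inv, smul_add,
    Prod.fst_add, Prod.snd_add, Prod.smul_fst, Prod.smul_snd, Prod.fst_sub, Prod.snd_sub,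
    smul_eq_mul]
  ring


theorem integral_fderiv_quadPoly_segment (x y ν : ℝ × ℝ) :
    ∫ t in (0:ℝ)..1, fderiv ℝ (quadPoly a₀ a₁ a₂ a₃ a₄ a₅) (x + t • (y - x)) ν =
      quadPolyDeriv a₁ a₂ a₃ a₄ a₅ (midpoint ℝ x y) ν := by
  let f : ℝ →ᵃ[ℝ] ℝ := (ContinuousLinearMap.apply ℝ ℝ ν).toLinearMap.toAffineMap.comp
    ((quadPolyDeriv a₁ a₂ a₃ a₄ a₅).comp (AffineMap.lineMap x y))
  have hf : ∀ t : ℝ, fderiv ℝ (quadPoly a₀ a₁ a₂ a₃ a₄ a₅) (x + t • (y - x)) ν = f t := by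
    intro t
    rw [fderiv_quadPoly, add_comm, ← AffineMap.lineMap_apply_module']
    rfl
  have hmid : AffineMap.lineMap x y (midpoint ℝ (0:ℝ) 1) = midpoint ℝ x y := by
    simp only [AffineMap.lineMap_apply_module', midpoint_eq_smul_add, invOf_eq_inv, smul_eq_mul,
      zero_add, mul_one, smul_add]
    module
  calc ∫ t in (0:ℝ)..1, fderiv ℝ (quadPoly a₀ a₁ a₂ a₃ a₄ a₅) (x + t • (y - x)) ν
      = ∫ t in (0:ℝ)..1, f t := by simp only [hf]
    _ = f (midpoint ℝ 0 1) := by rw [f.intervalIntegral_eq_mul_midpoint]; ring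
    _ = quadPolyDeriv a₁ a₂ a₃ a₄ a₅ (midpoint ℝ x y) ν := by
      rw [← hmid]
      rfl

theorem quadPolyDeriv_midpoint_eq_zero {x y ν : ℝ × ℝ} (hxy : x ≠ y) (hν : ν ≠ 0)
    (hνxy : (y - x).1 * ν.1 + (y - x).2 * ν.2 = 0)
    (hx : quadPoly a₀ a₁ a₂ a₃ a₄ a₅ x = 0) (hy : quadPoly a₀ a₁ a₂ a₃ a₄ a₅ y = 0)
    (hint : ∫ t in (0:ℝ)..1, fderiv ℝ (quadPoly a₀ a₁ a₂ a₃ a₄ a₅) (x + t • (y - x)) ν = 0) :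
    quadPolyDeriv a₁ a₂ a₃ a₄ a₅ (midpoint ℝ x y) = 0 := by
  have h_tangent : quadPolyDeriv a₁ a₂ a₃ a₄ a₅ (midpoint ℝ x y) (y - x) = 0 := by
    rw [← quadPoly_sub_eq_deriv_midpoint a₀, hx, hy, sub_zero]
  have h_normal : quadPolyDeriv a₁ a₂ a₃ a₄ a₅ (midpoint ℝ x y) ν = 0 := by
    rwa [← integral_fderiv_quadPoly_segment a₀]
  have hspan := (linearIndependent_pair_of_dot_eq_zero (sub_ne_zero.2 hxy.symm) hν hνxy)
    |>.span_eq_top_of_card_eq_finrank' (by simp)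
  exact ContinuousLinearMap.coe_injective
    (LinearMap.ext_on_range hspan (Fin.forall_fin_two.2 ⟨h_tangent, h_normal⟩))

end QuadPoly

/-- Unisolvence of the Morley element: a quadratic polynomial vanishing at the
three vertices of a nondegenerate triangle and with vanishing integral of the
normal derivative over each edge is identically zero. -/
theorem stmt_2
    (v₁ v₂ v₃ : ℝ × ℝ)
    (hK : ¬ Collinear ℝ ({v₁, v₂, v₃} : Set (ℝ × ℝ)))
    (ν₁ ν₂ ν₃ : ℝ × ℝ)
    -- ν₁ is a unit normal to the edge [v₂, v₃], etc.
    (hν₁ : (v₃ - v₂).1 * ν₁.1 + (v₃ - v₂).2 * ν₁.2 = 0) (hν₁n : ν₁.1 ^ 2 + ν₁.2 ^ 2 = 1)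
    (hν₂ : (v₁ - v₃).1 * ν₂.1 + (v₁ - v₃).2 * ν₂.2 = 0) (hν₂n : ν₂.1 ^ 2 + ν₂.2 ^ 2 = 1)
    (hν₃ : (v₂ - v₁).1 * ν₃.1 + (v₂ - v₁).2 * ν₃.2 = 0) (hν₃n : ν₃.1 ^ 2 + ν₃.2 ^ 2 = 1)
    (a₀ a₁ a₂ a₃ a₄ a₅ : ℝ) (p : ℝ × ℝ → ℝ)
    (hp : ∀ z : ℝ × ℝ,
      p z = a₀ + a₁ * z.1 + a₂ * z.2 + a₃ * z.1 * z.2 + a₄ * z.1 ^ 2 + a₅ * z.2 ^ 2)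
    (hval : p v₁ = 0 ∧ p v₂ = 0 ∧ p v₃ = 0)
    (hedge₁ : ∫ t in (0:ℝ)..1, fderiv ℝ p (v₂ + t • (v₃ - v₂)) ν₁ = 0)
    (hedge₂ : ∫ t in (0:ℝ)..1, fderiv ℝ p (v₃ + t • (v₁ - v₃)) ν₂ = 0)
    (hedge₃ : ∫ t in (0:ℝ)..1, fderiv ℝ p (v₁ + t • (v₂ - v₁)) ν₃ = 0) :
    ∀ z : ℝ × ℝ, p z = 0 := by
  obtain rfl : p = quadPoly a₀ a₁ a₂ a₃ a₄ a₅ := funext hp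
  obtain ⟨h₁, h₂, h₃⟩ := hval
  have unit_ne_zero : ∀ ν : ℝ × ℝ, ν.1 ^ 2 + ν.2 ^ 2 = 1 → ν ≠ 0 := by
    rintro ν hν rfl
    simp at hν
  have hm₁ := quadPolyDeriv_midpoint_eq_zero a₀ a₁ a₂ a₃ a₄ a₅ (ne₂₃_of_not_collinear hK)
    (unit_ne_zero ν₁ hν₁n) hν₁ h₂ h₃ hedge₁
  have hm₂ := quadPolyDeriv_midpoint_eq_zero a₀ a₁ a₂ a₃ a₄ a₅ (ne₁₃_of_not_collinear hK).symm
    (unit_ne_zero ν₂ hν₂n) hν₂ h₃ h₁ hedge₂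
  have hm₃ := quadPolyDeriv_midpoint_eq_zero a₀ a₁ a₂ a₃ a₄ a₅ (ne₁₂_of_not_collinear hK)
    (unit_ne_zero ν₃ hν₃n) hν₃ h₁ h₂ hedge₃
  have hspan : affineSpan ℝ {midpoint ℝ v₂ v₃, midpoint ℝ v₃ v₁, midpoint ℝ v₁ v₂} = ⊤ :=
    top_le_iff.1 (affineSpan_eq_top_of_not_collinear (by simp) hK ▸
      affineSpan_le_affineSpan_midpoints v₁ v₂ v₃)
  have hderiv : quadPolyDeriv a₁ a₂ a₃ a₄ a₅ = 0 := by
    refine AffineMap.ext_on hspan ?_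
    rintro z (rfl | rfl | rfl) <;> assumption
  intro z
  rw [← h₁]
  refine is_const_of_fderiv_eq_zero (fun z => (hasFDerivAt_quadPoly _ _ _ _ _ _ z).differentiableAt)
    (fun z => ?_) z v₁
  rw [fderiv_quadPoly, hderiv]
  rfl
end

section
/- (Necessity of the bulk criterion: arithmetic core) Suppose nonnegative reals E_H, E_h, D, Q, η², η_M² and positive constants α' ∈ (0,1), C_Drel, C_QO, C_Eff satisfy: (i) E_h ≤ α' E_H (error reduction with oscillation included), (ii) (1 − α')E_H ≤ D + 2C_QO √(E_h) √(Q) + η_M² (decomposition with jump of oscillations), (iii) D ≤ C_Drel η_M² (discrete reliability), (iv) Q ≤ η_M², and (v) C_Eff η² ≤ E_H (efficiency). Then θ* η² ≤ η_M² with θ* = (1−α')² C_Eff / (2(2α'(C_QO)² + (1−α')(C_Drel + 1))). -/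
/-- Arithmetic core of the necessity of the bulk criterion: under error
reduction, the decomposition estimate, discrete reliability, the oscillation
bound and efficiency, the marked estimator carries a fixed fraction `θ*` of the
total estimator. -/
theorem stmt_14
    (EH Eh D Q η2 ηM2 : ℝ)
    (hEH : 0 ≤ EH) (hEh : 0 ≤ Eh) (hD : 0 ≤ D) (hQ : 0 ≤ Q)
    (hη2 : 0 ≤ η2) (hηM2 : 0 ≤ ηM2)
    (α' CDrel CQO CEff : ℝ)
    (hα' : α' ∈ Set.Ioo (0:ℝ) 1) (hCDrel : 0 < CDrel) (hCQO : 0 < CQO) (hCEff : 0 < CEff)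
    (h1 : Eh ≤ α' * EH)
    (h2 : (1 - α') * EH ≤ D + 2 * CQO * Real.sqrt Eh * Real.sqrt Q + ηM2)
    (h3 : D ≤ CDrel * ηM2)
    (h4 : Q ≤ ηM2)
    (h5 : CEff * η2 ≤ EH) :
    ((1 - α') ^ 2 * CEff / (2 * (2 * α' * CQO ^ 2 + (1 - α') * (CDrel + 1)))) * η2 ≤ ηM2 := by
  obtain ⟨hα0, hα1⟩ := hα'
  have ha : (0:ℝ) < 1 - α' := by linarith
  set s := Real.sqrt Eh with hsdef
  set q := Real.sqrt Q with hqdef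
  have hs : s ^ 2 = Eh := Real.sq_sqrt hEh
  have hq : q ^ 2 = Q := Real.sq_sqrt hQ
  have hsn : 0 ≤ s := Real.sqrt_nonneg _
  have hqn : 0 ≤ q := Real.sqrt_nonneg _
  -- Young's inequality (scaled to avoid division)
  have key : 2 * α' * (1 - α') * (2 * CQO * s * q)
      ≤ (1 - α') ^ 2 * Eh + 4 * α' ^ 2 * CQO ^ 2 * Q := by
    have hsq := sq_nonneg ((1 - α') * s - 2 * α' * CQO * q)
    have e : ((1 - α') * s - 2 * α' * CQO * q) ^ 2
        = (1 - α') ^ 2 * Eh + 4 * α' ^ 2 * CQO ^ 2 * Q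
          - 2 * α' * (1 - α') * (2 * CQO * s * q) := by
      rw [← hs, ← hq]; ring
    rw [e] at hsq
    linarith
  -- multiply h2 by 2 α' (1 - α') and absorb
  have hEHbound : (1 - α') ^ 2 * EH
      ≤ 2 * (2 * α' * CQO ^ 2 + (1 - α') * (CDrel + 1)) * ηM2 := by
    have h2' : 2 * α' * (1 - α') * ((1 - α') * EH)
        ≤ 2 * α' * (1 - α') * (D + 2 * CQO * s * q + ηM2) :=
      mul_le_mul_of_nonneg_left h2 (by positivity)
    have t1 : (1 - α') ^ 2 * Eh ≤ (1 - α') ^ 2 * (α' * EH) :=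
      mul_le_mul_of_nonneg_left h1 (by positivity)
    have t2 : 2 * α' * (1 - α') * D ≤ 2 * α' * (1 - α') * (CDrel * ηM2) :=
      mul_le_mul_of_nonneg_left h3 (by positivity)
    have t3 : 4 * α' ^ 2 * CQO ^ 2 * Q ≤ 4 * α' ^ 2 * CQO ^ 2 * ηM2 :=
      mul_le_mul_of_nonneg_left h4 (by positivity)
    have big : α' * ((1 - α') ^ 2 * EH)
        ≤ α' * (2 * (2 * α' * CQO ^ 2 + (1 - α') * (CDrel + 1)) * ηM2) := by
      nlinarith [h2', key, t1, t2, t3]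
    exact le_of_mul_le_mul_left big hα0
  have hden : (0:ℝ) < 2 * (2 * α' * CQO ^ 2 + (1 - α') * (CDrel + 1)) := by positivity
  rw [div_mul_eq_mul_div, div_le_iff₀ hden]
  have h5' : (1 - α') ^ 2 * (CEff * η2) ≤ (1 - α') ^ 2 * EH :=
    mul_le_mul_of_nonneg_left h5 (by positivity)
  nlinarith [h5', hEHbound]
end
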